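/- arXiv:2212.13383 — 3 statements merged into one kernel-verified Lean document; each statement's English description precedes it below -/
import Mathlib

section
/- (Marginals, Case 4.) Suppose θ₁+θ₂ = θ₁′ and θ₁+θ₂ = θ₂′. Then for every y₁ ∈ (a,b), the marginal CDF F_{Y₁}(y₁) = ∫_a^{y₁} ∫_a^b f(u,v) dv du equals F₀(y₁)^{θ₁+θ₂}·[1 − θ₂ ln(F₀(y₁))], and for every y₂ ∈ (a,b), the marginal CDF F_{Y₂}(y₂) = ∫_a^b ∫_a^{y₂} f(u,v) dv du equals F₀(y₂)^{θ₁+θ₂}·[1 − θ₁ ln(F₀(y₂))]. -/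
/-!
Write θ = θ₁ + θ₂. In Case 4 the density is `θ θ₂ f₀(u) F₀(u)^(θ-1) · (log F₀)'(v)` above the
diagonal and `θ₁ (f₀(u)/F₀(u)) · (F₀^θ)'(v)` below it, so for fixed `u` and `u < w` the inner
integral over `(a, w)` is `f₀(u) F₀(u)^(θ-1) (θ₁ + θ θ₂ (ℓ - log F₀(u)))`, with `ℓ = log F₀(w)`
(`ℓ = 0` for `w = b`). This is the derivative of `F₀^θ (1 + θ₂ ℓ - θ₂ log F₀)`, which vanishes at
`a` because `x^θ log x → 0`; for `w ≤ u` the inner integral is `θ₁ F₀(w)^θ (log F₀)'(u)`.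
Every integral here is improper at an endpoint, but all integrands are nonnegative derivatives,
so the fundamental theorem of calculus with one-sided limits also yields their integrability.
-/

open MeasureTheory Set

noncomputable def dprh (a b : ℝ) (F₀ f₀ : ℝ → ℝ) (θ₁ θ₂ θ₁' θ₂' : ℝ) (y₁ y₂ : ℝ) : ℝ :=
  if a < y₁ ∧ y₁ < y₂ ∧ y₂ < b then
    θ₁' * θ₂ * f₀ y₁ * f₀ y₂ * F₀ y₁ ^ (θ₁' - 1) * F₀ y₂ ^ (θ₁ + θ₂ - θ₁' - 1)
  else if a < y₂ ∧ y₂ < y₁ ∧ y₁ < b then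
    θ₁ * θ₂' * f₀ y₁ * f₀ y₂ * F₀ y₁ ^ (θ₁ + θ₂ - θ₂' - 1) * F₀ y₂ ^ (θ₂' - 1)
  else 0

open Filter Topology Real

theorem intervalIntegrable_deriv_of_nonneg_of_tendsto {F G : ℝ → ℝ} {a b Fa Fb : ℝ} (hab : a < b)
    (hderiv : ∀ x ∈ Ioo a b, HasDerivAt F (G x) x) (hG : ∀ x ∈ Ioo a b, 0 ≤ G x)
    (ha : Tendsto F (𝓝[>] a) (𝓝 Fa)) (hb : Tendsto F (𝓝[<] b) (𝓝 Fb)) :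
    IntervalIntegrable G volume a b := by
  set F' := Function.update (Function.update F a Fa) b Fb with hF'
  have hF'deriv : ∀ x ∈ Ioo a b, HasDerivAt F' (G x) x := by
    refine fun x hx => (hderiv x hx).congr_of_eventuallyEq ?_
    filter_upwards [Ioo_mem_nhds hx.1 hx.2] with y hy
    rw [hF', Function.update_of_ne hy.2.ne, Function.update_of_ne hy.1.ne']
  have hcont : ContinuousOn F' (Icc a b) := by
    rw [continuousOn_update_iff, continuousOn_update_iff, Icc_sdiff_right, Ico_sdiff_left]
    refine ⟨⟨fun x hx => (hderiv x hx).continuousAt.continuousWithinAt, ?_⟩, ?_⟩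
    · exact fun _ => ha.mono_left (nhdsWithin_mono _ Ioo_subset_Ioi_self)
    · rintro -
      refine (hb.congr' ?_).mono_left (nhdsWithin_mono _ Ico_subset_Iio_self)
      filter_upwards [Ioo_mem_nhdsLT hab] with x hx using
        (Function.update_of_ne hx.1.ne' _ _).symm
  exact (intervalIntegrable_iff_integrableOn_Ioc_of_le hab.le).2
    (intervalIntegral.integrableOn_deriv_of_nonneg hcont hF'deriv hG)

theorem intervalIntegrable_and_integral_eq_sub_of_eqOn_deriv {F G g : ℝ → ℝ} {a b Fa Fb : ℝ}
    (hab : a < b) (hderiv : ∀ x ∈ Ioo a b, HasDerivAt F (G x) x)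
    (hG : ∀ x ∈ Ioo a b, 0 ≤ G x) (ha : Tendsto F (𝓝[>] a) (𝓝 Fa))
    (hb : Tendsto F (𝓝[<] b) (𝓝 Fb)) (hg : EqOn g G (Ioo a b)) :
    IntervalIntegrable g volume a b ∧ ∫ x in a..b, g x = Fb - Fa := by
  have hGint := intervalIntegrable_deriv_of_nonneg_of_tendsto hab hderiv hG ha hb
  refine ⟨hGint.congr_uIoo ?_, ?_⟩
  · rw [uIoo_of_le hab.le]; exact hg.symm
  · rw [intervalIntegral.integral_congr_Ioo_of_le hab.le hg]
    exact intervalIntegral.integral_eq_sub_of_hasDerivAt_of_tendsto hab hderiv hGint ha hb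

theorem tendsto_rpow_mul_sub_mul_log_nhdsGT_zero {θ : ℝ} (hθ : 0 < θ) (c d : ℝ) :
    Tendsto (fun x => x ^ θ * (c - d * log x)) (𝓝[>] 0) (𝓝 0) := by
  have hrpow : Tendsto (fun x : ℝ => x ^ θ) (𝓝[>] 0) (𝓝 0) := by
    simpa [zero_rpow hθ.ne'] using
      ((continuousAt_rpow_const 0 θ (Or.inr hθ.le)).tendsto).mono_left nhdsWithin_le_nhds
  have := (hrpow.const_mul c).sub ((tendsto_log_mul_rpow_nhdsGT_zero hθ).const_mul d)
  simpa using this.congr fun x => by ring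

theorem HasDerivAt.rpow_mul_sub_mul_log {F : ℝ → ℝ} {f x : ℝ} (hF : HasDerivAt F f x)
    (hx : F x ≠ 0) (θ c d : ℝ) :
    HasDerivAt (fun u => F u ^ θ * (c - d * Real.log (F u)))
      (f * F x ^ (θ - 1) * (θ * (c - d * Real.log (F x)) - d)) x := by
  refine ((hF.rpow_const (Or.inl hx)).mul ((hF.log hx).const_mul d |>.const_sub c)).congr_deriv ?_
  have hsplit : F x ^ θ = F x ^ (θ - 1) * F x := by
    rw [← rpow_add_one hx]; ring_nf
  rw [hsplit]
  field_simp
  ring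

section

variable {a b : ℝ} {F₀ f₀ : ℝ → ℝ} {θ₁ θ₂ : ℝ}

theorem dprh_eq_of_lt {u v : ℝ} (hu : a < u) (huv : u < v) (hv : v < b) :
    dprh a b F₀ f₀ θ₁ θ₂ (θ₁ + θ₂) (θ₁ + θ₂) u v =
      (θ₁ + θ₂) * θ₂ * f₀ u * F₀ u ^ (θ₁ + θ₂ - 1) * (f₀ v / F₀ v) := by
  rw [dprh, if_pos ⟨hu, huv, hv⟩, sub_self, zero_sub, rpow_neg_one]
  ring

theorem dprh_eq_of_gt {u v : ℝ} (hv : a < v) (hvu : v < u) (hu : u < b) :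
    dprh a b F₀ f₀ θ₁ θ₂ (θ₁ + θ₂) (θ₁ + θ₂) u v =
      θ₁ * (f₀ u / F₀ u) * (f₀ v * (θ₁ + θ₂) * F₀ v ^ (θ₁ + θ₂ - 1)) := by
  rw [dprh, if_neg fun h => hvu.not_gt h.2.1, if_pos ⟨hv, hvu, hu⟩, sub_self, zero_sub,
    rpow_neg_one]
  ring

theorem intervalIntegrable_dprh_and_integral_eq_of_le (hθ₁ : 0 < θ₁) (hθ₂ : 0 < θ₂)
    (hderiv : ∀ y ∈ Ioo a b, HasDerivAt F₀ (f₀ y) y) (hf₀pos : ∀ y ∈ Ioo a b, 0 < f₀ y)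
    (hF₀pos : ∀ y ∈ Ioo a b, 0 < F₀ y) (hFa : Tendsto F₀ (𝓝[>] a) (𝓝 0))
    {u w : ℝ} (hu : u ∈ Ioo a b) (hw : a < w) (hwu : w ≤ u) :
    IntervalIntegrable (dprh a b F₀ f₀ θ₁ θ₂ (θ₁ + θ₂) (θ₁ + θ₂) u) volume a w ∧
      ∫ v in a..w, dprh a b F₀ f₀ θ₁ θ₂ (θ₁ + θ₂) (θ₁ + θ₂) u v =
        θ₁ * (f₀ u / F₀ u) * F₀ w ^ (θ₁ + θ₂) := by
  have hθ : 0 < θ₁ + θ₂ := add_pos hθ₁ hθ₂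
  have hw' : w ∈ Ioo a b := ⟨hw, hwu.trans_lt hu.2⟩
  have hsub : Ioo a w ⊆ Ioo a b := Ioo_subset_Ioo_right hw'.2.le
  have hrpow : ∀ v ∈ Ioo a b, HasDerivAt (fun v => F₀ v ^ (θ₁ + θ₂))
      (f₀ v * (θ₁ + θ₂) * F₀ v ^ (θ₁ + θ₂ - 1)) v :=
    fun v hv => (hderiv v hv).rpow_const (Or.inl (hF₀pos v hv).ne')
  have hrpow_a : Tendsto (fun v => F₀ v ^ (θ₁ + θ₂)) (𝓝[>] a) (𝓝 0) := by
    simpa [zero_rpow hθ.ne'] using hFa.rpow_const (Or.inr hθ.le)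
  have key := intervalIntegrable_and_integral_eq_sub_of_eqOn_deriv hw
    (fun v hv => (hrpow v (hsub hv)).const_mul (θ₁ * (f₀ u / F₀ u)))
    (fun v hv => by
      have := hf₀pos u hu; have := hF₀pos u hu
      have := hf₀pos v (hsub hv); have := hF₀pos v (hsub hv); positivity)
    (by simpa using hrpow_a.const_mul (θ₁ * (f₀ u / F₀ u)))
    ((hrpow w hw').continuousAt.continuousWithinAt.const_mul _)
    (fun v hv => dprh_eq_of_gt hv.1 (hv.2.trans_le hwu) hu.2)
  exact ⟨key.1, key.2.trans (sub_zero _)⟩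

theorem intervalIntegrable_dprh_and_integral_eq_of_lt (hθ₁ : 0 < θ₁) (hθ₂ : 0 < θ₂)
    (hderiv : ∀ y ∈ Ioo a b, HasDerivAt F₀ (f₀ y) y) (hf₀pos : ∀ y ∈ Ioo a b, 0 < f₀ y)
    (hF₀pos : ∀ y ∈ Ioo a b, 0 < F₀ y) {u w ℓ : ℝ} (hu : u ∈ Ioo a b) (huw : u < w)
    (hwb : w ≤ b) (hℓ : Tendsto (fun v => Real.log (F₀ v)) (𝓝[<] w) (𝓝 ℓ)) :
    IntervalIntegrable (dprh a b F₀ f₀ θ₁ θ₂ (θ₁ + θ₂) (θ₁ + θ₂) u) volume u w ∧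
      ∫ v in u..w, dprh a b F₀ f₀ θ₁ θ₂ (θ₁ + θ₂) (θ₁ + θ₂) u v =
        (θ₁ + θ₂) * θ₂ * f₀ u * F₀ u ^ (θ₁ + θ₂ - 1) * (ℓ - Real.log (F₀ u)) := by
  have hsub : Ioo u w ⊆ Ioo a b := Ioo_subset_Ioo hu.1.le hwb
  have hlog_u : ContinuousAt (fun v => Real.log (F₀ v)) u :=
    ((hderiv u hu).log (hF₀pos u hu).ne').continuousAt
  have key := intervalIntegrable_and_integral_eq_sub_of_eqOn_deriv huw
    (fun v hv => ((hderiv v (hsub hv)).log (hF₀pos v (hsub hv)).ne').const_mul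
      ((θ₁ + θ₂) * θ₂ * f₀ u * F₀ u ^ (θ₁ + θ₂ - 1)))
    (fun v hv => by
      have := hf₀pos u hu; have := hF₀pos u hu
      have := hf₀pos v (hsub hv); have := hF₀pos v (hsub hv); positivity)
    (hlog_u.continuousWithinAt.const_mul _) (hℓ.const_mul _)
    (fun v hv => dprh_eq_of_lt hu.1 hv.1 (hv.2.trans_le hwb))
  exact ⟨key.1, key.2.trans (by ring)⟩

theorem integral_dprh_eq_of_lt (hθ₁ : 0 < θ₁) (hθ₂ : 0 < θ₂)
    (hderiv : ∀ y ∈ Ioo a b, HasDerivAt F₀ (f₀ y) y) (hf₀pos : ∀ y ∈ Ioo a b, 0 < f₀ y)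
    (hF₀pos : ∀ y ∈ Ioo a b, 0 < F₀ y) (hFa : Tendsto F₀ (𝓝[>] a) (𝓝 0))
    {u w ℓ : ℝ} (hu : u ∈ Ioo a b) (huw : u < w) (hwb : w ≤ b)
    (hℓ : Tendsto (fun v => Real.log (F₀ v)) (𝓝[<] w) (𝓝 ℓ)) :
    ∫ v in a..w, dprh a b F₀ f₀ θ₁ θ₂ (θ₁ + θ₂) (θ₁ + θ₂) u v =
      f₀ u * F₀ u ^ (θ₁ + θ₂ - 1) * (θ₁ + (θ₁ + θ₂) * θ₂ * (ℓ - Real.log (F₀ u))) := by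
  obtain ⟨hint_lo, hlo⟩ := intervalIntegrable_dprh_and_integral_eq_of_le hθ₁ hθ₂ hderiv hf₀pos
    hF₀pos hFa hu hu.1 le_rfl
  obtain ⟨hint_hi, hhi⟩ := intervalIntegrable_dprh_and_integral_eq_of_lt hθ₁ hθ₂ hderiv hf₀pos
    hF₀pos hu huw hwb hℓ
  have hF₀u := hF₀pos u hu
  have hsplit : F₀ u ^ (θ₁ + θ₂) = F₀ u ^ (θ₁ + θ₂ - 1) * F₀ u := by
    rw [← rpow_add_one hF₀u.ne']; ring_nf
  rw [← intervalIntegral.integral_add_adjacent_intervals hint_lo hint_hi, hlo, hhi, hsplit]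
  field_simp

theorem intervalIntegrable_and_integral_eq_rpow_mul_sub_log_of_eqOn (hθ₁ : 0 < θ₁) (hθ₂ : 0 < θ₂)
    (hderiv : ∀ y ∈ Ioo a b, HasDerivAt F₀ (f₀ y) y) (hf₀pos : ∀ y ∈ Ioo a b, 0 < f₀ y)
    (hF₀pos : ∀ y ∈ Ioo a b, 0 < F₀ y) (hFa : Tendsto F₀ (𝓝[>] a) (𝓝 0))
    {g : ℝ → ℝ} {y ℓ : ℝ} (hy : y ∈ Ioo a b) (hℓ : ∀ u ∈ Ioo a y, Real.log (F₀ u) ≤ ℓ)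
    (hg : EqOn g (fun u => f₀ u * F₀ u ^ (θ₁ + θ₂ - 1) *
      (θ₁ + (θ₁ + θ₂) * θ₂ * (ℓ - Real.log (F₀ u)))) (Ioo a y)) :
    IntervalIntegrable g volume a y ∧
      ∫ u in a..y, g u = F₀ y ^ (θ₁ + θ₂) * (1 + θ₂ * ℓ - θ₂ * Real.log (F₀ y)) := by
  have hsub : Ioo a y ⊆ Ioo a b := Ioo_subset_Ioo_right hy.2.le
  have hderiv' : ∀ u ∈ Ioo a b, HasDerivAt
      (fun u => F₀ u ^ (θ₁ + θ₂) * (1 + θ₂ * ℓ - θ₂ * Real.log (F₀ u)))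
      (f₀ u * F₀ u ^ (θ₁ + θ₂ - 1) * (θ₁ + (θ₁ + θ₂) * θ₂ * (ℓ - Real.log (F₀ u)))) u :=
    fun u hu => ((hderiv u hu).rpow_mul_sub_mul_log (hF₀pos u hu).ne' _ _ _).congr_deriv
      (by ring)
  have hFa' : Tendsto F₀ (𝓝[>] a) (𝓝[>] 0) := by
    refine tendsto_nhdsWithin_iff.2 ⟨hFa, ?_⟩
    filter_upwards [Ioo_mem_nhdsGT hy.1] with u hu using hF₀pos u (hsub hu)
  have key := intervalIntegrable_and_integral_eq_sub_of_eqOn_deriv hy.1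
    (fun u hu => hderiv' u (hsub hu))
    (fun u hu => by
      have := hf₀pos u (hsub hu); have := hF₀pos u (hsub hu); have := hℓ u hu
      have : 0 ≤ ℓ - Real.log (F₀ u) := by linarith
      positivity)
    ((tendsto_rpow_mul_sub_mul_log_nhdsGT_zero (add_pos hθ₁ hθ₂) _ _).comp hFa')
    (hderiv' y hy).continuousAt.continuousWithinAt hg
  exact ⟨key.1, key.2.trans (sub_zero _)⟩

theorem intervalIntegrable_and_integral_integral_dprh_of_le (hθ₁ : 0 < θ₁) (hθ₂ : 0 < θ₂)
    (hderiv : ∀ y ∈ Ioo a b, HasDerivAt F₀ (f₀ y) y) (hf₀pos : ∀ y ∈ Ioo a b, 0 < f₀ y)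
    (hF₀pos : ∀ y ∈ Ioo a b, 0 < F₀ y) (hFa : Tendsto F₀ (𝓝[>] a) (𝓝 0))
    (hFb : Tendsto F₀ (𝓝[<] b) (𝓝 1)) {y : ℝ} (hy : y ∈ Ioo a b) :
    IntervalIntegrable (fun u => ∫ v in a..y, dprh a b F₀ f₀ θ₁ θ₂ (θ₁ + θ₂) (θ₁ + θ₂) u v)
        volume y b ∧
      ∫ u in y..b, ∫ v in a..y, dprh a b F₀ f₀ θ₁ θ₂ (θ₁ + θ₂) (θ₁ + θ₂) u v =
        -θ₁ * F₀ y ^ (θ₁ + θ₂) * Real.log (F₀ y) := by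
  have hsub : Ioo y b ⊆ Ioo a b := Ioo_subset_Ioo_left hy.1.le
  have key := intervalIntegrable_and_integral_eq_sub_of_eqOn_deriv hy.2
    (fun u hu => ((hderiv u (hsub hu)).log (hF₀pos u (hsub hu)).ne').const_mul
      (θ₁ * F₀ y ^ (θ₁ + θ₂)))
    (fun u hu => by
      have := hf₀pos u (hsub hu); have := hF₀pos u (hsub hu); have := hF₀pos y hy; positivity)
    (((hderiv y hy).log (hF₀pos y hy).ne').continuousAt.continuousWithinAt.const_mul _)
    (by simpa using (hFb.log one_ne_zero).const_mul (θ₁ * F₀ y ^ (θ₁ + θ₂)))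
    (fun u hu => (intervalIntegrable_dprh_and_integral_eq_of_le hθ₁ hθ₂ hderiv hf₀pos hF₀pos hFa
      (hsub hu) hy.1 hu.1.le).2.trans (by ring))
  exact ⟨key.1, key.2.trans (by ring)⟩

end

theorem dprh_marginals_case4_general
    (a b : ℝ) (F₀ f₀ : ℝ → ℝ)
    (hderiv : ∀ y ∈ Ioo a b, HasDerivAt F₀ (f₀ y) y)
    (hmono : StrictMonoOn F₀ (Ioo a b))
    (hf₀pos : ∀ y ∈ Ioo a b, 0 < f₀ y)
    (hF₀pos : ∀ y ∈ Ioo a b, 0 < F₀ y)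
    (hF₀lt1 : ∀ y ∈ Ioo a b, F₀ y < 1)
    (hFa : Filter.Tendsto F₀ (nhdsWithin a (Ioi a)) (nhds 0))
    (hFb : Filter.Tendsto F₀ (nhdsWithin b (Iio b)) (nhds 1))
    (θ₁ θ₂ θ₁' θ₂' : ℝ) (hθ₁ : 0 < θ₁) (hθ₂ : 0 < θ₂)
    (heq₁ : θ₁ + θ₂ = θ₁') (heq₂ : θ₁ + θ₂ = θ₂')
    :
    (∀ y₁ ∈ Ioo a b,
      (∫ u in a..y₁, ∫ v in a..b, dprh a b F₀ f₀ θ₁ θ₂ θ₁' θ₂' u v) =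
        F₀ y₁ ^ (θ₁ + θ₂) * (1 - θ₂ * Real.log (F₀ y₁))) ∧
    (∀ y₂ ∈ Ioo a b,
      (∫ u in a..b, ∫ v in a..y₂, dprh a b F₀ f₀ θ₁ θ₂ θ₁' θ₂' u v) =
        F₀ y₂ ^ (θ₁ + θ₂) * (1 - θ₁ * Real.log (F₀ y₂))) := by
  subst heq₁ heq₂
  have hlog_b : Tendsto (fun v => Real.log (F₀ v)) (𝓝[<] b) (𝓝 0) := by
    simpa using hFb.log one_ne_zero
  refine ⟨fun y₁ hy₁ => ?_, fun y₂ hy₂ => ?_⟩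
  · have hsub : Ioo a y₁ ⊆ Ioo a b := Ioo_subset_Ioo_right hy₁.2.le
    rw [(intervalIntegrable_and_integral_eq_rpow_mul_sub_log_of_eqOn hθ₁ hθ₂ hderiv hf₀pos hF₀pos hFa hy₁
      (fun u hu => log_nonpos (hF₀pos u (hsub hu)).le (hF₀lt1 u (hsub hu)).le)
      (fun u hu => integral_dprh_eq_of_lt hθ₁ hθ₂ hderiv hf₀pos hF₀pos hFa (hsub hu)
        (hu.2.trans hy₁.2) le_rfl hlog_b)).2]
    ring
  · have hsub : Ioo a y₂ ⊆ Ioo a b := Ioo_subset_Ioo_right hy₂.2.le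
    obtain ⟨hint_lo, hlo⟩ := intervalIntegrable_and_integral_eq_rpow_mul_sub_log_of_eqOn hθ₁ hθ₂ hderiv hf₀pos
      hF₀pos hFa hy₂
      (fun u hu => log_le_log (hF₀pos u (hsub hu)) (hmono (hsub hu) hy₂ hu.2).le)
      (fun u hu => integral_dprh_eq_of_lt hθ₁ hθ₂ hderiv hf₀pos hF₀pos hFa (hsub hu) hu.2
        hy₂.2.le ((hderiv y₂ hy₂).log (hF₀pos y₂ hy₂).ne').continuousAt.continuousWithinAt)
    obtain ⟨hint_hi, hhi⟩ := intervalIntegrable_and_integral_integral_dprh_of_le hθ₁ hθ₂ hderiv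
      hf₀pos hF₀pos hFa hFb hy₂
    rw [← intervalIntegral.integral_add_adjacent_intervals hint_lo hint_hi, hlo, hhi]
    ring

theorem dprh_marginals_case4
    (a b : ℝ) (hab : a < b) (F₀ f₀ : ℝ → ℝ)
    (hderiv : ∀ y ∈ Ioo a b, HasDerivAt F₀ (f₀ y) y)
    (hf₀cont : ContinuousOn f₀ (Ioo a b))
    (hmono : StrictMonoOn F₀ (Ioo a b))
    (hf₀pos : ∀ y ∈ Ioo a b, 0 < f₀ y)
    (hF₀pos : ∀ y ∈ Ioo a b, 0 < F₀ y)
    (hF₀lt1 : ∀ y ∈ Ioo a b, F₀ y < 1)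
    (hFa : Filter.Tendsto F₀ (nhdsWithin a (Ioi a)) (nhds 0))
    (hFb : Filter.Tendsto F₀ (nhdsWithin b (Iio b)) (nhds 1))
    (θ₁ θ₂ θ₁' θ₂' : ℝ) (hθ₁ : 0 < θ₁) (hθ₂ : 0 < θ₂) (hθ₁' : 0 < θ₁') (hθ₂' : 0 < θ₂')
    (heq₁ : θ₁ + θ₂ = θ₁') (heq₂ : θ₁ + θ₂ = θ₂')
    :
    (∀ y₁ ∈ Ioo a b,
      (∫ u in a..y₁, ∫ v in a..b, dprh a b F₀ f₀ θ₁ θ₂ θ₁' θ₂' u v) =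
        F₀ y₁ ^ (θ₁ + θ₂) * (1 - θ₂ * Real.log (F₀ y₁))) ∧
    (∀ y₂ ∈ Ioo a b,
      (∫ u in a..b, ∫ v in a..y₂, dprh a b F₀ f₀ θ₁ θ₂ θ₁' θ₂' u v) =
        F₀ y₂ ^ (θ₁ + θ₂) * (1 - θ₁ * Real.log (F₀ y₂))) :=
  dprh_marginals_case4_general a b F₀ f₀ hderiv hmono hf₀pos hF₀pos hF₀lt1 hFa hFb θ₁ θ₂ θ₁' θ₂' hθ₁
    hθ₂ heq₁ heq₂
end

section
/- (Local dependence measure, non-degenerate case.) Suppose θ₁+θ₂ ≠ θ₁′. Then for all a < y₁ < y₂ < b, the local dependence measure β(y₁,y₂) = F(y₁,y₂)·f(y₁,y₂) / (F₁(y₁,y₂)·F₂(y₁,y₂)), where F₁ = ∂F/∂y₁ and F₂ = ∂F/∂y₂, equals [θ₁′(θ₁−θ₁′)·F₀(y₁)^{θ₁+θ₂−θ₁′} + θ₁′θ₂·F₀(y₂)^{θ₁+θ₂−θ₁′}] / [(θ₁−θ₁′)(θ₁+θ₂)·F₀(y₁)^{θ₁+θ₂−θ₁′} + θ₁′θ₂·F₀(y₂)^{θ₁+θ₂−θ₁′}].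 -/
open MeasureTheory Set

/-!
Every integral in sight has the form `∫ f₀ F₀^(c-1) = [F₀^c / c]`, the integrand being a
nonnegative derivative and hence integrable. Integrating the density in `v` (split at `v = u`)
and then in `u` gives, for `a < s < t < b` and `q = θ₁ + θ₂ - θ₁'`,
`F(s, t) = (θ₂ F₀(s)^θ₁' F₀(t)^q + (θ₁ - θ₁') F₀(s)^(θ₁ + θ₂)) / q`.
Differentiating this closed form, `F f` and `F₁ F₂` share a nonzero factor, which cancels.
-/

open Filter Topology

theorem intervalIntegrable_deriv_of_nonneg_of_tendsto_s13 {g g' : ℝ → ℝ} {x y gx gy : ℝ}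
    (hxy : x < y) (hderiv : ∀ t ∈ Ioo x y, HasDerivAt g (g' t) t)
    (hnonneg : ∀ t ∈ Ioo x y, 0 ≤ g' t)
    (hx : Tendsto g (𝓝[>] x) (𝓝 gx)) (hy : Tendsto g (𝓝[<] y) (𝓝 gy)) :
    IntervalIntegrable g' volume x y := by
  classical
  set G := Function.update (Function.update g x gx) y gy
  have hGg : EqOn G g (Ioo x y) := fun t ht => by
    simp only [G, Function.update_of_ne ht.2.ne, Function.update_of_ne ht.1.ne']
  have hcont : ContinuousOn G (Icc x y) := by
    rw [continuousOn_update_iff, continuousOn_update_iff, Icc_sdiff_right, Ico_sdiff_left]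
    refine ⟨⟨fun t ht => (hderiv t ht).continuousAt.continuousWithinAt,
      fun _ => hx.mono_left (nhdsWithin_mono _ Ioo_subset_Ioi_self)⟩, fun _ => ?_⟩
    refine (hy.congr' ?_).mono_left (nhdsWithin_mono _ Ico_subset_Iio_self)
    filter_upwards [Ioo_mem_nhdsLT hxy] with t ht
    exact (Function.update_of_ne ht.1.ne' _ _).symm
  refine (intervalIntegrable_iff_integrableOn_Ioc_of_le hxy.le).2 <|
    intervalIntegral.integrableOn_deriv_of_nonneg hcont (fun t ht => ?_) hnonneg
  exact (hderiv t ht).congr_of_eventuallyEq (eventuallyEq_of_mem (Ioo_mem_nhds ht.1 ht.2) hGg)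

theorem integral_mul_rpow_sub_one_of_tendsto {F f : ℝ → ℝ} {x y A B c : ℝ} (hxy : x < y)
    (hderiv : ∀ t ∈ Ioo x y, HasDerivAt F (f t) t) (hf : ∀ t ∈ Ioo x y, 0 ≤ f t)
    (hF : ∀ t ∈ Ioo x y, 0 < F t) (hA : Tendsto F (𝓝[>] x) (𝓝 A))
    (hB : Tendsto F (𝓝[<] y) (𝓝 B)) (hc : c ≠ 0) (hAc : A ≠ 0 ∨ 0 ≤ c) (hBc : B ≠ 0 ∨ 0 ≤ c) :
    IntervalIntegrable (fun t => f t * F t ^ (c - 1)) volume x y ∧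
      ∫ t in x..y, f t * F t ^ (c - 1) = B ^ c / c - A ^ c / c := by
  have hG : ∀ t ∈ Ioo x y, HasDerivAt (fun s => F s ^ c / c) (f t * F t ^ (c - 1)) t :=
    fun t ht => ((hderiv t ht).rpow_const (Or.inl (hF t ht).ne')).div_const c
      |>.congr_deriv (by field_simp)
  have hGA := ((Real.continuousAt_rpow_const A c hAc).tendsto.comp hA).div_const c
  have hGB := ((Real.continuousAt_rpow_const B c hBc).tendsto.comp hB).div_const c
  have hint := intervalIntegrable_deriv_of_nonneg_of_tendsto_s13 hxy hG
    (fun t ht => mul_nonneg (hf t ht) (Real.rpow_nonneg (hF t ht).le _)) hGA hGB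
  exact ⟨hint, intervalIntegral.integral_eq_sub_of_hasDerivAt_of_tendsto hxy hG hint hGA hGB⟩

section DPRH

variable {a b : ℝ} {F₀ f₀ : ℝ → ℝ} {θ₁ θ₂ θ₁' θ₂' : ℝ}

theorem integral_mul_rpow_sub_one_of_tendsto_zero
    (hderiv : ∀ y ∈ Ioo a b, HasDerivAt F₀ (f₀ y) y) (hf₀ : ∀ y ∈ Ioo a b, 0 ≤ f₀ y)
    (hF₀ : ∀ y ∈ Ioo a b, 0 < F₀ y) (hFa : Tendsto F₀ (𝓝[>] a) (𝓝 0))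
    {c u : ℝ} (hc : 0 < c) (hu : u ∈ Ioo a b) :
    IntervalIntegrable (fun v => f₀ v * F₀ v ^ (c - 1)) volume a u ∧
      ∫ v in a..u, f₀ v * F₀ v ^ (c - 1) = F₀ u ^ c / c := by
  have hsub : Ioo a u ⊆ Ioo a b := Ioo_subset_Ioo_right hu.2.le
  have h := integral_mul_rpow_sub_one_of_tendsto hu.1 (fun v hv => hderiv v (hsub hv))
    (fun v hv => hf₀ v (hsub hv)) (fun v hv => hF₀ v (hsub hv)) hFa
    ((hderiv u hu).continuousAt.tendsto.mono_left nhdsWithin_le_nhds) hc.ne'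
    (Or.inr hc.le) (Or.inr hc.le)
  simpa [Real.zero_rpow hc.ne'] using h

theorem integral_mul_rpow_sub_one_of_mem_Ioo
    (hderiv : ∀ y ∈ Ioo a b, HasDerivAt F₀ (f₀ y) y) (hf₀ : ∀ y ∈ Ioo a b, 0 ≤ f₀ y)
    (hF₀ : ∀ y ∈ Ioo a b, 0 < F₀ y) {c u t : ℝ} (hc : c ≠ 0) (hu : a < u) (hut : u < t)
    (ht : t < b) :
    IntervalIntegrable (fun v => f₀ v * F₀ v ^ (c - 1)) volume u t ∧
      ∫ v in u..t, f₀ v * F₀ v ^ (c - 1) = F₀ t ^ c / c - F₀ u ^ c / c := by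
  have hsub : Ioo u t ⊆ Ioo a b := Ioo_subset_Ioo hu.le ht.le
  exact integral_mul_rpow_sub_one_of_tendsto hut (fun v hv => hderiv v (hsub hv))
    (fun v hv => hf₀ v (hsub hv)) (fun v hv => hF₀ v (hsub hv))
    ((hderiv u ⟨hu, hut.trans ht⟩).continuousAt.tendsto.mono_left nhdsWithin_le_nhds)
    ((hderiv t ⟨hu.trans hut, ht⟩).continuousAt.tendsto.mono_left nhdsWithin_le_nhds) hc
    (Or.inl (hF₀ u ⟨hu, hut.trans ht⟩).ne') (Or.inl (hF₀ t ⟨hu.trans hut, ht⟩).ne')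

theorem integral_dprh_snd
    (hderiv : ∀ y ∈ Ioo a b, HasDerivAt F₀ (f₀ y) y) (hf₀ : ∀ y ∈ Ioo a b, 0 ≤ f₀ y)
    (hF₀ : ∀ y ∈ Ioo a b, 0 < F₀ y) (hFa : Tendsto F₀ (𝓝[>] a) (𝓝 0))
    (hθ₂' : 0 < θ₂') (hne : θ₁ + θ₂ ≠ θ₁') {u t : ℝ} (hu : a < u) (hut : u < t) (ht : t < b) :
    ∫ v in a..t, dprh a b F₀ f₀ θ₁ θ₂ θ₁' θ₂' u v =
      (θ₁ - θ₁') * (θ₁ + θ₂) / (θ₁ + θ₂ - θ₁') * (f₀ u * F₀ u ^ (θ₁ + θ₂ - 1)) +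
        θ₁' * θ₂ * F₀ t ^ (θ₁ + θ₂ - θ₁') / (θ₁ + θ₂ - θ₁') * (f₀ u * F₀ u ^ (θ₁' - 1)) := by
  have hu' : u ∈ Ioo a b := ⟨hu, hut.trans ht⟩
  have hq : θ₁ + θ₂ - θ₁' ≠ 0 := sub_ne_zero.mpr hne
  have hlow : EqOn (dprh a b F₀ f₀ θ₁ θ₂ θ₁' θ₂' u) (fun v => θ₁ * θ₂' * f₀ u *
      F₀ u ^ (θ₁ + θ₂ - θ₂' - 1) * (f₀ v * F₀ v ^ (θ₂' - 1))) (uIoo a u) := by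
    intro v hv
    rw [uIoo_of_le hu.le] at hv
    rw [dprh, if_neg fun h => h.2.1.not_gt hv.2, if_pos ⟨hv.1, hv.2, hu'.2⟩]
    ring
  have hupp : EqOn (dprh a b F₀ f₀ θ₁ θ₂ θ₁' θ₂' u) (fun v => θ₁' * θ₂ * f₀ u *
      F₀ u ^ (θ₁' - 1) * (f₀ v * F₀ v ^ (θ₁ + θ₂ - θ₁' - 1))) (uIoo u t) := by
    intro v hv
    rw [uIoo_of_le hut.le] at hv
    rw [dprh, if_pos ⟨hu, hv.1, hv.2.trans ht⟩]
    ring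
  obtain ⟨hint₁, hI₁⟩ := integral_mul_rpow_sub_one_of_tendsto_zero hderiv hf₀ hF₀ hFa hθ₂' hu'
  obtain ⟨hint₂, hI₂⟩ := integral_mul_rpow_sub_one_of_mem_Ioo hderiv hf₀ hF₀ hq hu hut ht
  rw [← intervalIntegral.integral_add_adjacent_intervals
      ((intervalIntegrable_congr_uIoo hlow).2 (hint₁.const_mul _))
      ((intervalIntegrable_congr_uIoo hupp).2 (hint₂.const_mul _)),
    intervalIntegral.integral_congr_uIoo hlow, intervalIntegral.integral_congr_uIoo hupp,
    intervalIntegral.integral_const_mul, intervalIntegral.integral_const_mul, hI₁, hI₂]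
  have hF₀u := hF₀ u hu'
  have hS : F₀ u ^ (θ₁ + θ₂ - θ₂' - 1) * F₀ u ^ θ₂' = F₀ u ^ (θ₁ + θ₂ - 1) := by
    rw [← Real.rpow_add hF₀u]; ring_nf
  have hS' : F₀ u ^ (θ₁' - 1) * F₀ u ^ (θ₁ + θ₂ - θ₁') = F₀ u ^ (θ₁ + θ₂ - 1) := by
    rw [← Real.rpow_add hF₀u]; ring_nf
  field_simp
  linear_combination θ₁ * f₀ u * (θ₁ + θ₂ - θ₁') * hS - θ₁' * θ₂ * f₀ u * hS'

theorem integral_integral_dprh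
    (hderiv : ∀ y ∈ Ioo a b, HasDerivAt F₀ (f₀ y) y) (hf₀ : ∀ y ∈ Ioo a b, 0 ≤ f₀ y)
    (hF₀ : ∀ y ∈ Ioo a b, 0 < F₀ y) (hFa : Tendsto F₀ (𝓝[>] a) (𝓝 0))
    (hθ : 0 < θ₁ + θ₂) (hθ₁' : 0 < θ₁') (hθ₂' : 0 < θ₂') (hne : θ₁ + θ₂ ≠ θ₁')
    {s t : ℝ} (hs : a < s) (hst : s < t) (ht : t < b) :
    ∫ u in a..s, ∫ v in a..t, dprh a b F₀ f₀ θ₁ θ₂ θ₁' θ₂' u v =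
      (θ₂ * F₀ s ^ θ₁' * F₀ t ^ (θ₁ + θ₂ - θ₁') + (θ₁ - θ₁') * F₀ s ^ (θ₁ + θ₂)) /
        (θ₁ + θ₂ - θ₁') := by
  have hs' : s ∈ Ioo a b := ⟨hs, hst.trans ht⟩
  have hq : θ₁ + θ₂ - θ₁' ≠ 0 := sub_ne_zero.mpr hne
  obtain ⟨hint₁, hI₁⟩ := integral_mul_rpow_sub_one_of_tendsto_zero hderiv hf₀ hF₀ hFa hθ hs'
  obtain ⟨hint₂, hI₂⟩ := integral_mul_rpow_sub_one_of_tendsto_zero hderiv hf₀ hF₀ hFa hθ₁' hs'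
  rw [intervalIntegral.integral_congr_Ioo_of_le hs.le fun u hu =>
      integral_dprh_snd hderiv hf₀ hF₀ hFa hθ₂' hne hu.1 (hu.2.trans hst) ht,
    intervalIntegral.integral_add (hint₁.const_mul _) (hint₂.const_mul _),
    intervalIntegral.integral_const_mul, intervalIntegral.integral_const_mul, hI₁, hI₂]
  field_simp
  ring

theorem hasDerivAt_integral_integral_dprh_fst
    (hderiv : ∀ y ∈ Ioo a b, HasDerivAt F₀ (f₀ y) y) (hf₀ : ∀ y ∈ Ioo a b, 0 ≤ f₀ y)
    (hF₀ : ∀ y ∈ Ioo a b, 0 < F₀ y) (hFa : Tendsto F₀ (𝓝[>] a) (𝓝 0))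
    (hθ : 0 < θ₁ + θ₂) (hθ₁' : 0 < θ₁') (hθ₂' : 0 < θ₂') (hne : θ₁ + θ₂ ≠ θ₁')
    {s t : ℝ} (hs : a < s) (hst : s < t) (ht : t < b) :
    HasDerivAt (fun s => ∫ u in a..s, ∫ v in a..t, dprh a b F₀ f₀ θ₁ θ₂ θ₁' θ₂' u v)
      ((θ₂ * (f₀ s * θ₁' * F₀ s ^ (θ₁' - 1)) * F₀ t ^ (θ₁ + θ₂ - θ₁') +
        (θ₁ - θ₁') * (f₀ s * (θ₁ + θ₂) * F₀ s ^ (θ₁ + θ₂ - 1))) / (θ₁ + θ₂ - θ₁')) s := by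
  have hF₀s := (hF₀ s ⟨hs, hst.trans ht⟩).ne'
  have hdF₀s := hderiv s ⟨hs, hst.trans ht⟩
  refine HasDerivAt.congr_of_eventuallyEq ?_ <| eventually_nhds_iff.2 ⟨Ioo a t, fun s' hs' =>
    integral_integral_dprh hderiv hf₀ hF₀ hFa hθ hθ₁' hθ₂' hne hs'.1 hs'.2 ht, isOpen_Ioo, hs, hst⟩
  exact ((((hdF₀s.rpow_const (Or.inl hF₀s)).const_mul θ₂).mul_const _).add
    ((hdF₀s.rpow_const (Or.inl hF₀s)).const_mul _)).div_const _

theorem hasDerivAt_integral_integral_dprh_snd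
    (hderiv : ∀ y ∈ Ioo a b, HasDerivAt F₀ (f₀ y) y) (hf₀ : ∀ y ∈ Ioo a b, 0 ≤ f₀ y)
    (hF₀ : ∀ y ∈ Ioo a b, 0 < F₀ y) (hFa : Tendsto F₀ (𝓝[>] a) (𝓝 0))
    (hθ : 0 < θ₁ + θ₂) (hθ₁' : 0 < θ₁') (hθ₂' : 0 < θ₂') (hne : θ₁ + θ₂ ≠ θ₁')
    {s t : ℝ} (hs : a < s) (hst : s < t) (ht : t < b) :
    HasDerivAt (fun t => ∫ u in a..s, ∫ v in a..t, dprh a b F₀ f₀ θ₁ θ₂ θ₁' θ₂' u v)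
      (θ₂ * F₀ s ^ θ₁' * (f₀ t * (θ₁ + θ₂ - θ₁') * F₀ t ^ (θ₁ + θ₂ - θ₁' - 1)) /
        (θ₁ + θ₂ - θ₁')) t := by
  have hdF₀t := hderiv t ⟨hs.trans hst, ht⟩
  refine HasDerivAt.congr_of_eventuallyEq ?_ <| eventually_nhds_iff.2 ⟨Ioo s b, fun t' ht' =>
    integral_integral_dprh hderiv hf₀ hF₀ hFa hθ hθ₁' hθ₂' hne hs ht'.1 ht'.2, isOpen_Ioo, hst, ht⟩
  exact (((hdF₀t.rpow_const (Or.inl (hF₀ t ⟨hs.trans hst, ht⟩).ne')).const_mul _).add_const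
    _).div_const _

end DPRH

theorem dprh_local_dependence_nondegenerate_general
    (a b : ℝ) (F₀ f₀ : ℝ → ℝ)
    (hderiv : ∀ y ∈ Ioo a b, HasDerivAt F₀ (f₀ y) y)
    (hf₀pos : ∀ y ∈ Ioo a b, 0 < f₀ y)
    (hF₀pos : ∀ y ∈ Ioo a b, 0 < F₀ y)
    (hFa : Filter.Tendsto F₀ (nhdsWithin a (Ioi a)) (nhds 0))
    (θ₁ θ₂ θ₁' θ₂' : ℝ) (hθ₁ : 0 < θ₁) (hθ₂ : 0 < θ₂) (hθ₁' : 0 < θ₁') (hθ₂' : 0 < θ₂')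
    (hne : θ₁ + θ₂ ≠ θ₁') (y₁ y₂ : ℝ) (h₁ : a < y₁) (h₂ : y₁ < y₂) (h₃ : y₂ < b)
    :
    (∫ u in a..y₁, ∫ v in a..y₂, dprh a b F₀ f₀ θ₁ θ₂ θ₁' θ₂' u v) * dprh a b F₀ f₀ θ₁ θ₂ θ₁' θ₂' y₁ y₂ /
      (deriv (fun s => ∫ u in a..s, ∫ v in a..y₂, dprh a b F₀ f₀ θ₁ θ₂ θ₁' θ₂' u v) y₁ *
        deriv (fun t => ∫ u in a..y₁, ∫ v in a..t, dprh a b F₀ f₀ θ₁ θ₂ θ₁' θ₂' u v) y₂) =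
      (θ₁' * (θ₁ - θ₁') * F₀ y₁ ^ (θ₁ + θ₂ - θ₁') + θ₁' * θ₂ * F₀ y₂ ^ (θ₁ + θ₂ - θ₁')) /
        ((θ₁ - θ₁') * (θ₁ + θ₂) * F₀ y₁ ^ (θ₁ + θ₂ - θ₁') + θ₁' * θ₂ * F₀ y₂ ^ (θ₁ + θ₂ - θ₁')) := by
  have hf₀ : ∀ y ∈ Ioo a b, 0 ≤ f₀ y := fun y hy => (hf₀pos y hy).le
  have hθ : 0 < θ₁ + θ₂ := add_pos hθ₁ hθ₂
  have hq : θ₁ + θ₂ - θ₁' ≠ 0 := sub_ne_zero.mpr hne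
  have hX := hF₀pos y₁ ⟨h₁, h₂.trans h₃⟩
  have hY := hF₀pos y₂ ⟨h₁.trans h₂, h₃⟩
  have hα := hf₀pos y₁ ⟨h₁, h₂.trans h₃⟩
  have hβ := hf₀pos y₂ ⟨h₁.trans h₂, h₃⟩
  rw [integral_integral_dprh hderiv hf₀ hF₀pos hFa hθ hθ₁' hθ₂' hne h₁ h₂ h₃,
    (hasDerivAt_integral_integral_dprh_fst hderiv hf₀ hF₀pos hFa hθ hθ₁' hθ₂' hne h₁ h₂ h₃).deriv,
    (hasDerivAt_integral_integral_dprh_snd hderiv hf₀ hF₀pos hFa hθ hθ₁' hθ₂' hne h₁ h₂ h₃).deriv,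
    dprh, if_pos ⟨h₁, h₂, h₃⟩,
    show F₀ y₁ ^ (θ₁ + θ₂) = F₀ y₁ ^ θ₁' * F₀ y₁ ^ (θ₁ + θ₂ - θ₁') by
      rw [← Real.rpow_add hX, add_sub_cancel],
    show F₀ y₁ ^ (θ₁ + θ₂ - 1) = F₀ y₁ ^ (θ₁' - 1) * F₀ y₁ ^ (θ₁ + θ₂ - θ₁') by
      rw [← Real.rpow_add hX]; ring_nf]
  have hK : θ₂ * f₀ y₁ * f₀ y₂ * F₀ y₁ ^ θ₁' * F₀ y₁ ^ (θ₁' - 1) *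
      F₀ y₂ ^ (θ₁ + θ₂ - θ₁' - 1) / (θ₁ + θ₂ - θ₁') ≠ 0 := by positivity
  -- valid even if the common denominator vanishes: both sides are then `0`
  conv_rhs => rw [← mul_div_mul_left _ _ hK]
  congr 1 <;> field_simp <;> ring

theorem dprh_local_dependence_nondegenerate
    (a b : ℝ) (hab : a < b) (F₀ f₀ : ℝ → ℝ)
    (hderiv : ∀ y ∈ Ioo a b, HasDerivAt F₀ (f₀ y) y)
    (hf₀cont : ContinuousOn f₀ (Ioo a b))
    (hmono : StrictMonoOn F₀ (Ioo a b))
    (hf₀pos : ∀ y ∈ Ioo a b, 0 < f₀ y)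
    (hF₀pos : ∀ y ∈ Ioo a b, 0 < F₀ y)
    (hF₀lt1 : ∀ y ∈ Ioo a b, F₀ y < 1)
    (hFa : Filter.Tendsto F₀ (nhdsWithin a (Ioi a)) (nhds 0))
    (hFb : Filter.Tendsto F₀ (nhdsWithin b (Iio b)) (nhds 1))
    (θ₁ θ₂ θ₁' θ₂' : ℝ) (hθ₁ : 0 < θ₁) (hθ₂ : 0 < θ₂) (hθ₁' : 0 < θ₁') (hθ₂' : 0 < θ₂')
    (hne : θ₁ + θ₂ ≠ θ₁') (y₁ y₂ : ℝ) (h₁ : a < y₁) (h₂ : y₁ < y₂) (h₃ : y₂ < b)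
    :
    (∫ u in a..y₁, ∫ v in a..y₂, dprh a b F₀ f₀ θ₁ θ₂ θ₁' θ₂' u v) * dprh a b F₀ f₀ θ₁ θ₂ θ₁' θ₂' y₁ y₂ /
      (deriv (fun s => ∫ u in a..s, ∫ v in a..y₂, dprh a b F₀ f₀ θ₁ θ₂ θ₁' θ₂' u v) y₁ *
        deriv (fun t => ∫ u in a..y₁, ∫ v in a..t, dprh a b F₀ f₀ θ₁ θ₂ θ₁' θ₂' u v) y₂) =
      (θ₁' * (θ₁ - θ₁') * F₀ y₁ ^ (θ₁ + θ₂ - θ₁') + θ₁' * θ₂ * F₀ y₂ ^ (θ₁ + θ₂ - θ₁')) /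
        ((θ₁ - θ₁') * (θ₁ + θ₂) * F₀ y₁ ^ (θ₁ + θ₂ - θ₁') + θ₁' * θ₂ * F₀ y₂ ^ (θ₁ + θ₂ - θ₁')) :=
  dprh_local_dependence_nondegenerate_general a b F₀ f₀ hderiv hf₀pos hF₀pos hFa θ₁ θ₂ θ₁' θ₂' hθ₁
    hθ₂ hθ₁' hθ₂' hne y₁ y₂ h₁ h₂ h₃
end

section
/- (Local dependence measure, degenerate case.) Suppose θ₁+θ₂ = θ₁′. Then for all a < y₁ < y₂ < b, the local dependence measure β(y₁,y₂) = F(y₁,y₂)·f(y₁,y₂) / (F₁(y₁,y₂)·F₂(y₁,y₂)), where F₁ = ∂F/∂y₁ and F₂ = ∂F/∂y₂, equals [θ₁′ + θ₂ θ₁′ ln(F₀(y₂)/F₀(y₁))] / [θ₁ + θ₂ θ₁′ ln(F₀(y₂)/F₀(y₁))]. -/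
/-!
When θ₁ + θ₂ = θ₁′ the density above the diagonal is
θ₁′θ₂ f₀(y₁) F₀(y₁)^(θ₁′-1) · f₀(y₂)/F₀(y₂), so the inner integral in v produces a logarithm and,
for a < s < w < b, the joint CDF has the closed form
F(s, w) = F₀(s)^θ₁′ (1 + θ₂ (log F₀(w) - log F₀(s))).
The integrals starting at a are improper, since F₀ → 0 there; each is evaluated by the fundamental
theorem of calculus after extending the antiderivative continuously to a, integrability coming from
the nonnegativity of the integrand. Differentiating the closed form gives F₁ and F₂, and β is then
a rational expression in θ₁, θ₂, θ₁′ and log (F₀(y₂)/F₀(y₁)).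
-/

open MeasureTheory Set

open Filter Topology Real

section ImproperFTC

variable {Φ φ : ℝ → ℝ} {a s c : ℝ}

lemma update_eventuallyEq_nhds_of_ne {x : ℝ} (hx : x ≠ a) :
    Function.update Φ a c =ᶠ[𝓝 x] Φ :=
  (eventually_ne_nhds hx).mono fun _ hy => Function.update_of_ne hy _ _

lemma continuousOn_update_Icc_of_tendsto_nhdsGT
    (hderiv : ∀ x ∈ Ioc a s, HasDerivAt Φ (φ x) x) (hlim : Tendsto Φ (𝓝[>] a) (𝓝 c)) :
    ContinuousOn (Function.update Φ a c) (Icc a s) := by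
  intro x hx
  rcases hx.1.eq_or_lt with rfl | hax
  · refine continuousWithinAt_update_same.2 (hlim.mono_left (nhdsWithin_mono _ ?_))
    exact fun y hy => lt_of_le_of_ne hy.1.1 (Ne.symm hy.2)
  · exact ((hderiv x ⟨hax, hx.2⟩).continuousAt.congr
      (update_eventuallyEq_nhds_of_ne hax.ne').symm).continuousWithinAt

lemma intervalIntegrable_of_hasDerivAt_of_tendsto_nhdsGT (has : a ≤ s)
    (hderiv : ∀ x ∈ Ioc a s, HasDerivAt Φ (φ x) x) (hnonneg : ∀ x ∈ Ioo a s, 0 ≤ φ x)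
    (hlim : Tendsto Φ (𝓝[>] a) (𝓝 c)) :
    IntervalIntegrable φ volume a s := by
  rw [intervalIntegrable_iff_integrableOn_Ioc_of_le has]
  exact intervalIntegral.integrableOn_deriv_of_nonneg
    (continuousOn_update_Icc_of_tendsto_nhdsGT hderiv hlim)
    (fun x hx => (hderiv x (Ioo_subset_Ioc_self hx)).congr_of_eventuallyEq
      (update_eventuallyEq_nhds_of_ne hx.1.ne'))
    hnonneg

lemma integral_eq_sub_of_hasDerivAt_of_tendsto_nhdsGT (has : a < s)
    (hderiv : ∀ x ∈ Ioc a s, HasDerivAt Φ (φ x) x) (hnonneg : ∀ x ∈ Ioo a s, 0 ≤ φ x)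
    (hlim : Tendsto Φ (𝓝[>] a) (𝓝 c)) :
    ∫ x in a..s, φ x = Φ s - c := by
  have h := intervalIntegral.integral_eq_sub_of_hasDeriv_right_of_le has.le
    (continuousOn_update_Icc_of_tendsto_nhdsGT hderiv hlim)
    (fun x hx => ((hderiv x (Ioo_subset_Ioc_self hx)).congr_of_eventuallyEq
      (update_eventuallyEq_nhds_of_ne hx.1.ne')).hasDerivWithinAt)
    (intervalIntegrable_of_hasDerivAt_of_tendsto_nhdsGT has.le hderiv hnonneg hlim)
  rwa [Function.update_self, Function.update_of_ne has.ne'] at h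

end ImproperFTC

lemma tendsto_rpow_nhds_zero {p : ℝ} (hp : 0 < p) :
    Tendsto (fun t : ℝ => t ^ p) (𝓝 0) (𝓝 0) := by
  simpa [zero_rpow hp.ne'] using (continuousAt_rpow_const 0 p (Or.inr hp.le)).tendsto

lemma tendsto_rpow_mul_add_mul_log_nhdsGT_zero {p : ℝ} (hp : 0 < p) (c d : ℝ) :
    Tendsto (fun t => t ^ p * (c + d * log t)) (𝓝[>] 0) (𝓝 0) := by
  have h := ((tendsto_rpow_nhds_zero hp).mono_left nhdsWithin_le_nhds).mul_const c |>.add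
    ((tendsto_log_mul_rpow_nhdsGT_zero hp).const_mul d)
  simp only [zero_mul, mul_zero, add_zero] at h
  exact h.congr fun t => by ring

section Baseline

variable {a b : ℝ} {F₀ f₀ : ℝ → ℝ}

lemma tendsto_nhdsGT_zero_of_pos (hab : a < b) (hpos : ∀ y ∈ Ioo a b, 0 < F₀ y)
    (hlim : Tendsto F₀ (𝓝[>] a) (𝓝 0)) : Tendsto F₀ (𝓝[>] a) (𝓝[>] 0) :=
  tendsto_nhdsWithin_iff.2 ⟨hlim, eventually_of_mem (Ioo_mem_nhdsGT hab) hpos⟩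

lemma hasDerivAt_rpow_div {x p : ℝ} (hF : HasDerivAt F₀ (f₀ x) x) (hpos : 0 < F₀ x)
    (hp : p ≠ 0) : HasDerivAt (fun v => F₀ v ^ p / p) (f₀ x * F₀ x ^ (p - 1)) x :=
  ((hF.rpow_const (Or.inl hpos.ne')).div_const p).congr_deriv (by field_simp)

lemma hasDerivAt_rpow_mul_one_add_mul_log_sub {x : ℝ} (hF : HasDerivAt F₀ (f₀ x) x)
    (hpos : 0 < F₀ x) (p q L : ℝ) :
    HasDerivAt (fun u => F₀ u ^ p * (1 + q * (L - log (F₀ u))))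
      (f₀ x * F₀ x ^ (p - 1) * (p - q + p * q * (L - log (F₀ x)))) x := by
  refine ((hF.rpow_const (Or.inl hpos.ne')).mul
    (((hF.log hpos.ne').const_sub L).const_mul q |>.const_add 1)).congr_deriv ?_
  rw [rpow_sub_one hpos.ne']
  field_simp
  ring

lemma intervalIntegrable_mul_rpow_sub_one {x p : ℝ}
    (hderiv : ∀ y ∈ Ioc a x, HasDerivAt F₀ (f₀ y) y) (hf₀ : ∀ y ∈ Ioo a x, 0 ≤ f₀ y)
    (hF₀ : ∀ y ∈ Ioc a x, 0 < F₀ y) (hlim : Tendsto F₀ (𝓝[>] a) (𝓝 0)) (hp : 0 < p)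
    (hax : a ≤ x) : IntervalIntegrable (fun v => f₀ v * F₀ v ^ (p - 1)) volume a x :=
  intervalIntegrable_of_hasDerivAt_of_tendsto_nhdsGT hax
    (fun y hy => hasDerivAt_rpow_div (hderiv y hy) (hF₀ y hy) hp.ne')
    (fun y hy => mul_nonneg (hf₀ y hy) (rpow_nonneg (hF₀ y (Ioo_subset_Ioc_self hy)).le _))
    (by simpa using ((tendsto_rpow_nhds_zero hp).comp hlim).div_const p)

lemma integral_mul_rpow_sub_one_eq_rpow_div {x p : ℝ}
    (hderiv : ∀ y ∈ Ioc a x, HasDerivAt F₀ (f₀ y) y) (hf₀ : ∀ y ∈ Ioo a x, 0 ≤ f₀ y)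
    (hF₀ : ∀ y ∈ Ioc a x, 0 < F₀ y) (hlim : Tendsto F₀ (𝓝[>] a) (𝓝 0)) (hp : 0 < p)
    (hax : a < x) : ∫ v in a..x, f₀ v * F₀ v ^ (p - 1) = F₀ x ^ p / p := by
  rw [integral_eq_sub_of_hasDerivAt_of_tendsto_nhdsGT hax
    (fun y hy => hasDerivAt_rpow_div (hderiv y hy) (hF₀ y hy) hp.ne')
    (fun y hy => mul_nonneg (hf₀ y hy) (rpow_nonneg (hF₀ y (Ioo_subset_Ioc_self hy)).le _))
    (by simpa using ((tendsto_rpow_nhds_zero hp).comp hlim).div_const p), sub_zero]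

lemma intervalIntegrable_div_of_hasDerivAt {u w : ℝ}
    (hderiv : ∀ y ∈ Icc u w, HasDerivAt F₀ (f₀ y) y) (hf₀ : ∀ y ∈ Ioo u w, 0 ≤ f₀ y)
    (hF₀ : ∀ y ∈ Icc u w, 0 < F₀ y) (huw : u ≤ w) :
    IntervalIntegrable (fun v => f₀ v / F₀ v) volume u w :=
  intervalIntegrable_of_hasDerivAt_of_tendsto_nhdsGT huw
    (fun y hy => (hderiv y (Ioc_subset_Icc_self hy)).log (hF₀ y (Ioc_subset_Icc_self hy)).ne')
    (fun y hy => div_nonneg (hf₀ y hy) (hF₀ y (Ioo_subset_Icc_self hy)).le)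
    (((hderiv u (left_mem_Icc.2 huw)).log
      (hF₀ u (left_mem_Icc.2 huw)).ne').continuousAt.tendsto.mono_left nhdsWithin_le_nhds)

lemma integral_div_eq_log_sub_log {u w : ℝ} (hderiv : ∀ y ∈ Icc u w, HasDerivAt F₀ (f₀ y) y)
    (hf₀ : ∀ y ∈ Ioo u w, 0 ≤ f₀ y) (hF₀ : ∀ y ∈ Icc u w, 0 < F₀ y) (huw : u ≤ w) :
    ∫ v in u..w, f₀ v / F₀ v = log (F₀ w) - log (F₀ u) :=
  intervalIntegral.integral_eq_sub_of_hasDerivAt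
    (fun y hy => (hderiv y (uIcc_of_le huw ▸ hy)).log (hF₀ y (uIcc_of_le huw ▸ hy)).ne')
    (intervalIntegrable_div_of_hasDerivAt hderiv hf₀ hF₀ huw)

end Baseline

section DPRH

variable {a b : ℝ} {F₀ f₀ : ℝ → ℝ} {θ₁ θ₂ θ₁' θ₂' : ℝ}

lemma dprh_of_lt_of_add_eq (heq : θ₁ + θ₂ = θ₁') {y₁ y₂ : ℝ} (h₁ : a < y₁) (h₂ : y₁ < y₂)
    (h₃ : y₂ < b) :
    dprh a b F₀ f₀ θ₁ θ₂ θ₁' θ₂' y₁ y₂ =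
      θ₁' * θ₂ * f₀ y₁ * f₀ y₂ * F₀ y₁ ^ (θ₁' - 1) / F₀ y₂ := by
  rw [dprh, if_pos ⟨h₁, h₂, h₃⟩, heq, sub_self, zero_sub, rpow_neg_one, div_eq_mul_inv]

lemma dprh_of_gt {y₁ y₂ : ℝ} (h₁ : a < y₂) (h₂ : y₂ < y₁) (h₃ : y₁ < b) :
    dprh a b F₀ f₀ θ₁ θ₂ θ₁' θ₂' y₁ y₂ =
      θ₁ * θ₂' * f₀ y₁ * f₀ y₂ * F₀ y₁ ^ (θ₁ + θ₂ - θ₂' - 1) * F₀ y₂ ^ (θ₂' - 1) := by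
  rw [dprh, if_neg fun h => h₂.not_gt h.2.1, if_pos ⟨h₁, h₂, h₃⟩]

lemma integral_dprh_of_lt (hderiv : ∀ y ∈ Ioo a b, HasDerivAt F₀ (f₀ y) y)
    (hf₀pos : ∀ y ∈ Ioo a b, 0 < f₀ y) (hF₀pos : ∀ y ∈ Ioo a b, 0 < F₀ y)
    (hFa : Tendsto F₀ (𝓝[>] a) (𝓝 0)) (hθ₂' : 0 < θ₂') (heq : θ₁ + θ₂ = θ₁') {u w : ℝ}
    (hu : a < u) (huw : u < w) (hwb : w < b) :
    ∫ v in a..w, dprh a b F₀ f₀ θ₁ θ₂ θ₁' θ₂' u v =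
      f₀ u * F₀ u ^ (θ₁' - 1) * (θ₁ + θ₁' * θ₂ * (log (F₀ w) - log (F₀ u))) := by
  have hleft : Ioc a u ⊆ Ioo a b := fun y hy => ⟨hy.1, hy.2.trans_lt (huw.trans hwb)⟩
  have hright : Icc u w ⊆ Ioo a b := fun y hy => ⟨hu.trans_le hy.1, hy.2.trans_lt hwb⟩
  have hub : u ∈ Ioo a b := hleft (right_mem_Ioc.2 hu)
  have hderiv₁ : ∀ y ∈ Ioc a u, HasDerivAt F₀ (f₀ y) y := fun y hy => hderiv y (hleft hy)
  have hf₀₁ : ∀ y ∈ Ioo a u, 0 ≤ f₀ y := fun y hy => (hf₀pos y (hleft (Ioo_subset_Ioc_self hy))).le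
  have hF₀₁ : ∀ y ∈ Ioc a u, 0 < F₀ y := fun y hy => hF₀pos y (hleft hy)
  have hderiv₂ : ∀ y ∈ Icc u w, HasDerivAt F₀ (f₀ y) y := fun y hy => hderiv y (hright hy)
  have hf₀₂ : ∀ y ∈ Ioo u w, 0 ≤ f₀ y := fun y hy => (hf₀pos y (hright (Ioo_subset_Icc_self hy))).le
  have hF₀₂ : ∀ y ∈ Icc u w, 0 < F₀ y := fun y hy => hF₀pos y (hright hy)
  set C₁ := θ₁ * θ₂' * f₀ u * F₀ u ^ (θ₁ + θ₂ - θ₂' - 1)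
  set C₂ := θ₁' * θ₂ * f₀ u * F₀ u ^ (θ₁' - 1)
  have heq₁ : EqOn (fun v => C₁ * (f₀ v * F₀ v ^ (θ₂' - 1)))
      (fun v => dprh a b F₀ f₀ θ₁ θ₂ θ₁' θ₂' u v) (uIoo a u) := fun v hv => by
    rw [uIoo_of_le hu.le] at hv
    simp only [dprh_of_gt hv.1 hv.2 hub.2, C₁]
    ring
  have heq₂ : EqOn (fun v => C₂ * (f₀ v / F₀ v))
      (fun v => dprh a b F₀ f₀ θ₁ θ₂ θ₁' θ₂' u v) (uIoo u w) := fun v hv => by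
    rw [uIoo_of_le huw.le] at hv
    simp only [dprh_of_lt_of_add_eq heq hu hv.1 (hv.2.trans hwb), C₂]
    ring
  have hint₁ := ((intervalIntegrable_mul_rpow_sub_one hderiv₁ hf₀₁ hF₀₁ hFa hθ₂' hu.le).const_mul
    C₁).congr_uIoo heq₁
  have hint₂ := ((intervalIntegrable_div_of_hasDerivAt hderiv₂ hf₀₂ hF₀₂ huw.le).const_mul
    C₂).congr_uIoo heq₂
  rw [← intervalIntegral.integral_add_adjacent_intervals hint₁ hint₂,
    ← intervalIntegral.integral_congr_uIoo heq₁, ← intervalIntegral.integral_congr_uIoo heq₂,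
    intervalIntegral.integral_const_mul, intervalIntegral.integral_const_mul,
    integral_mul_rpow_sub_one_eq_rpow_div hderiv₁ hf₀₁ hF₀₁ hFa hθ₂' hu,
    integral_div_eq_log_sub_log hderiv₂ hf₀₂ hF₀₂ huw.le]
  have hpow : F₀ u ^ (θ₁ + θ₂ - θ₂' - 1) * F₀ u ^ θ₂' = F₀ u ^ (θ₁' - 1) := by
    rw [← rpow_add (hF₀pos u hub), ← heq]
    ring_nf
  simp only [C₁, C₂]
  field_simp
  linear_combination θ₁ * f₀ u * hpow

lemma integral_integral_dprh_of_lt (hderiv : ∀ y ∈ Ioo a b, HasDerivAt F₀ (f₀ y) y)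
    (hmono : StrictMonoOn F₀ (Ioo a b)) (hf₀pos : ∀ y ∈ Ioo a b, 0 < f₀ y)
    (hF₀pos : ∀ y ∈ Ioo a b, 0 < F₀ y) (hFa : Tendsto F₀ (𝓝[>] a) (𝓝 0)) (hθ₁ : 0 < θ₁)
    (hθ₂ : 0 ≤ θ₂) (hθ₂' : 0 < θ₂') (heq : θ₁ + θ₂ = θ₁') {s w : ℝ} (hs : a < s) (hsw : s < w)
    (hwb : w < b) :
    ∫ u in a..s, ∫ v in a..w, dprh a b F₀ f₀ θ₁ θ₂ θ₁' θ₂' u v =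
      F₀ s ^ θ₁' * (1 + θ₂ * (log (F₀ w) - log (F₀ s))) := by
  have hsub : Ioc a s ⊆ Ioo a b := fun y hy => ⟨hy.1, hy.2.trans_lt (hsw.trans hwb)⟩
  have hw : w ∈ Ioo a b := ⟨hs.trans hsw, hwb⟩
  have hθ₁' : 0 < θ₁' := heq ▸ add_pos_of_pos_of_nonneg hθ₁ hθ₂
  have hderiv' : ∀ x ∈ Ioc a s,
      HasDerivAt (fun u => F₀ u ^ θ₁' * (1 + θ₂ * (log (F₀ w) - log (F₀ u))))
        (f₀ x * F₀ x ^ (θ₁' - 1) * (θ₁ + θ₁' * θ₂ * (log (F₀ w) - log (F₀ x)))) x := fun x hx =>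
    (hasDerivAt_rpow_mul_one_add_mul_log_sub (hderiv x (hsub hx)) (hF₀pos x (hsub hx)) _ _
      _).congr_deriv (by rw [← heq]; ring)
  have hnonneg : ∀ x ∈ Ioo a s,
      0 ≤ f₀ x * F₀ x ^ (θ₁' - 1) * (θ₁ + θ₁' * θ₂ * (log (F₀ w) - log (F₀ x))) := fun x hx => by
    have hx' := hsub (Ioo_subset_Ioc_self hx)
    have hlog : 0 < log (F₀ w) - log (F₀ x) :=
      sub_pos.2 (log_lt_log (hF₀pos x hx') (hmono hx' hw (hx.2.trans hsw)))
    exact mul_nonneg (mul_nonneg (hf₀pos x hx').le (rpow_nonneg (hF₀pos x hx').le _))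
      (by positivity)
  have hlim : Tendsto (fun u => F₀ u ^ θ₁' * (1 + θ₂ * (log (F₀ w) - log (F₀ u))))
      (𝓝[>] a) (𝓝 0) :=
    ((tendsto_rpow_mul_add_mul_log_nhdsGT_zero hθ₁' (1 + θ₂ * log (F₀ w)) (-θ₂)).comp
      (tendsto_nhdsGT_zero_of_pos (hw.1.trans hwb) hF₀pos hFa)).congr fun u => by
        simp only [Function.comp_apply]
        ring
  rw [intervalIntegral.integral_congr_Ioo_of_le hs.le fun u hu => integral_dprh_of_lt hderiv hf₀pos
    hF₀pos hFa hθ₂' heq hu.1 (hu.2.trans hsw) hwb,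
    integral_eq_sub_of_hasDerivAt_of_tendsto_nhdsGT hs hderiv' hnonneg hlim, sub_zero]

lemma hasDerivAt_integral_integral_dprh_left (hderiv : ∀ y ∈ Ioo a b, HasDerivAt F₀ (f₀ y) y)
    (hmono : StrictMonoOn F₀ (Ioo a b)) (hf₀pos : ∀ y ∈ Ioo a b, 0 < f₀ y)
    (hF₀pos : ∀ y ∈ Ioo a b, 0 < F₀ y) (hFa : Tendsto F₀ (𝓝[>] a) (𝓝 0)) (hθ₁ : 0 < θ₁)
    (hθ₂ : 0 ≤ θ₂) (hθ₂' : 0 < θ₂') (heq : θ₁ + θ₂ = θ₁') {y₁ y₂ : ℝ} (h₁ : a < y₁)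
    (h₂ : y₁ < y₂) (h₃ : y₂ < b) :
    HasDerivAt (fun s => ∫ u in a..s, ∫ v in a..y₂, dprh a b F₀ f₀ θ₁ θ₂ θ₁' θ₂' u v)
      (f₀ y₁ * F₀ y₁ ^ (θ₁' - 1) * (θ₁ + θ₁' * θ₂ * (log (F₀ y₂) - log (F₀ y₁)))) y₁ := by
  have hy₁ : y₁ ∈ Ioo a b := ⟨h₁, h₂.trans h₃⟩
  have hcdf : (fun s => ∫ u in a..s, ∫ v in a..y₂, dprh a b F₀ f₀ θ₁ θ₂ θ₁' θ₂' u v) =ᶠ[𝓝 y₁]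
      fun s => F₀ s ^ θ₁' * (1 + θ₂ * (log (F₀ y₂) - log (F₀ s))) := by
    filter_upwards [Ioo_mem_nhds h₁ h₂] with s hs using integral_integral_dprh_of_lt hderiv
      hmono hf₀pos hF₀pos hFa hθ₁ hθ₂ hθ₂' heq hs.1 hs.2 h₃
  refine ((hasDerivAt_rpow_mul_one_add_mul_log_sub (hderiv y₁ hy₁) (hF₀pos y₁ hy₁) _ _ _
    ).congr_of_eventuallyEq hcdf).congr_deriv ?_
  rw [← heq]
  ring

lemma hasDerivAt_integral_integral_dprh_right (hderiv : ∀ y ∈ Ioo a b, HasDerivAt F₀ (f₀ y) y)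
    (hmono : StrictMonoOn F₀ (Ioo a b)) (hf₀pos : ∀ y ∈ Ioo a b, 0 < f₀ y)
    (hF₀pos : ∀ y ∈ Ioo a b, 0 < F₀ y) (hFa : Tendsto F₀ (𝓝[>] a) (𝓝 0)) (hθ₁ : 0 < θ₁)
    (hθ₂ : 0 ≤ θ₂) (hθ₂' : 0 < θ₂') (heq : θ₁ + θ₂ = θ₁') {y₁ y₂ : ℝ} (h₁ : a < y₁)
    (h₂ : y₁ < y₂) (h₃ : y₂ < b) :
    HasDerivAt (fun t => ∫ u in a..y₁, ∫ v in a..t, dprh a b F₀ f₀ θ₁ θ₂ θ₁' θ₂' u v)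
      (θ₂ * F₀ y₁ ^ θ₁' * f₀ y₂ / F₀ y₂) y₂ := by
  have hy₂ : y₂ ∈ Ioo a b := ⟨h₁.trans h₂, h₃⟩
  have hcdf : (fun t => ∫ u in a..y₁, ∫ v in a..t, dprh a b F₀ f₀ θ₁ θ₂ θ₁' θ₂' u v) =ᶠ[𝓝 y₂]
      fun t => F₀ y₁ ^ θ₁' * (1 + θ₂ * (log (F₀ t) - log (F₀ y₁))) := by
    filter_upwards [Ioo_mem_nhds h₂ h₃] with t ht using integral_integral_dprh_of_lt hderiv
      hmono hf₀pos hF₀pos hFa hθ₁ hθ₂ hθ₂' heq h₁ ht.1 ht.2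
  refine (((((hderiv y₂ hy₂).log (hF₀pos y₂ hy₂).ne').sub_const _).const_mul θ₂).const_add 1
    |>.const_mul (F₀ y₁ ^ θ₁') |>.congr_of_eventuallyEq hcdf).congr_deriv ?_
  ring

end DPRH

theorem dprh_local_dependence_degenerate_general
    (a b : ℝ) (F₀ f₀ : ℝ → ℝ)
    (hderiv : ∀ y ∈ Ioo a b, HasDerivAt F₀ (f₀ y) y)
    (hmono : StrictMonoOn F₀ (Ioo a b))
    (hf₀pos : ∀ y ∈ Ioo a b, 0 < f₀ y)
    (hF₀pos : ∀ y ∈ Ioo a b, 0 < F₀ y)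
    (hFa : Filter.Tendsto F₀ (nhdsWithin a (Ioi a)) (nhds 0))
    (θ₁ θ₂ θ₁' θ₂' : ℝ) (hθ₁ : 0 < θ₁) (hθ₂ : 0 < θ₂) (hθ₂' : 0 < θ₂')
    (heq : θ₁ + θ₂ = θ₁') (y₁ y₂ : ℝ) (h₁ : a < y₁) (h₂ : y₁ < y₂) (h₃ : y₂ < b)
    :
    (∫ u in a..y₁, ∫ v in a..y₂, dprh a b F₀ f₀ θ₁ θ₂ θ₁' θ₂' u v) * dprh a b F₀ f₀ θ₁ θ₂ θ₁' θ₂' y₁ y₂ /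
      (deriv (fun s => ∫ u in a..s, ∫ v in a..y₂, dprh a b F₀ f₀ θ₁ θ₂ θ₁' θ₂' u v) y₁ *
        deriv (fun t => ∫ u in a..y₁, ∫ v in a..t, dprh a b F₀ f₀ θ₁ θ₂ θ₁' θ₂' u v) y₂) =
      (θ₁' + θ₂ * θ₁' * Real.log (F₀ y₂ / F₀ y₁)) /
        (θ₁ + θ₂ * θ₁' * Real.log (F₀ y₂ / F₀ y₁)) := by
  have hy₁ : y₁ ∈ Ioo a b := ⟨h₁, h₂.trans h₃⟩
  have hy₂ : y₂ ∈ Ioo a b := ⟨h₁.trans h₂, h₃⟩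
  have hL : 0 < log (F₀ y₂) - log (F₀ y₁) :=
    sub_pos.2 (log_lt_log (hF₀pos y₁ hy₁) (hmono hy₁ hy₂ h₂))
  rw [integral_integral_dprh_of_lt hderiv hmono hf₀pos hF₀pos hFa hθ₁ hθ₂.le hθ₂' heq h₁ h₂ h₃,
    dprh_of_lt_of_add_eq heq h₁ h₂ h₃,
    (hasDerivAt_integral_integral_dprh_left hderiv hmono hf₀pos hF₀pos hFa hθ₁ hθ₂.le hθ₂' heq
      h₁ h₂ h₃).deriv,
    (hasDerivAt_integral_integral_dprh_right hderiv hmono hf₀pos hF₀pos hFa hθ₁ hθ₂.le hθ₂' heq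
      h₁ h₂ h₃).deriv,
    log_div (hF₀pos y₂ hy₂).ne' (hF₀pos y₁ hy₁).ne']
  have hf₁ := hf₀pos y₁ hy₁
  have hf₂ := hf₀pos y₂ hy₂
  have hF₁ := hF₀pos y₁ hy₁
  have hF₂ := hF₀pos y₂ hy₂
  have hθ₁' : 0 < θ₁' := heq ▸ add_pos hθ₁ hθ₂
  have hden : 0 < θ₁ + θ₁' * θ₂ * (log (F₀ y₂) - log (F₀ y₁)) := by positivity
  field_simp

theorem dprh_local_dependence_degenerate
    (a b : ℝ) (hab : a < b) (F₀ f₀ : ℝ → ℝ)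
    (hderiv : ∀ y ∈ Ioo a b, HasDerivAt F₀ (f₀ y) y)
    (hf₀cont : ContinuousOn f₀ (Ioo a b))
    (hmono : StrictMonoOn F₀ (Ioo a b))
    (hf₀pos : ∀ y ∈ Ioo a b, 0 < f₀ y)
    (hF₀pos : ∀ y ∈ Ioo a b, 0 < F₀ y)
    (hF₀lt1 : ∀ y ∈ Ioo a b, F₀ y < 1)
    (hFa : Filter.Tendsto F₀ (nhdsWithin a (Ioi a)) (nhds 0))
    (hFb : Filter.Tendsto F₀ (nhdsWithin b (Iio b)) (nhds 1))
    (θ₁ θ₂ θ₁' θ₂' : ℝ) (hθ₁ : 0 < θ₁) (hθ₂ : 0 < θ₂) (hθ₁' : 0 < θ₁') (hθ₂' : 0 < θ₂')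
    (heq : θ₁ + θ₂ = θ₁') (y₁ y₂ : ℝ) (h₁ : a < y₁) (h₂ : y₁ < y₂) (h₃ : y₂ < b)
    :
    (∫ u in a..y₁, ∫ v in a..y₂, dprh a b F₀ f₀ θ₁ θ₂ θ₁' θ₂' u v) * dprh a b F₀ f₀ θ₁ θ₂ θ₁' θ₂' y₁ y₂ /
      (deriv (fun s => ∫ u in a..s, ∫ v in a..y₂, dprh a b F₀ f₀ θ₁ θ₂ θ₁' θ₂' u v) y₁ *
        deriv (fun t => ∫ u in a..y₁, ∫ v in a..t, dprh a b F₀ f₀ θ₁ θ₂ θ₁' θ₂' u v) y₂) =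
      (θ₁' + θ₂ * θ₁' * Real.log (F₀ y₂ / F₀ y₁)) /
        (θ₁ + θ₂ * θ₁' * Real.log (F₀ y₂ / F₀ y₁)) :=
  dprh_local_dependence_degenerate_general a b F₀ f₀ hderiv hmono hf₀pos hF₀pos hFa θ₁ θ₂ θ₁' θ₂'
    hθ₁ hθ₂ hθ₂' heq y₁ y₂ h₁ h₂ h₃
end
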